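/- Ericksen's identity: if ψ : ℝ³ × Matrix (Fin 3) (Fin 3) ℝ → ℝ is smooth and rotationally invariant, i.e., ψ(Qν, Q(∇ν)Qᵀ) = ψ(ν, ∇ν) for all Q ∈ SO(3), then ε_{iqp} [ν_q ∂ψ/∂ν_p + (∂_k ν_q)(∂ψ/∂(∂_k ν_p)) + (∂_q ν_k)(∂ψ/∂(∂_p ν_k))] = 0 for each i. -/

import Mathlib

open Matrix

/-- Levi-Civita symbol on `Fin 3`. -/
noncomputable def leviCivita (i j k : Fin 3) : ℝ :=
  ((j : ℝ) - (i : ℝ)) * ((k : ℝ) - (j : ℝ)) * ((k : ℝ) - (i : ℝ)) / 2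

/-- Infinitesimal generator of rotations about axis `i`. -/
noncomputable def Wm (i : Fin 3) : Matrix (Fin 3) (Fin 3) ℝ :=
  Matrix.of fun q p => -leviCivita i q p

lemma Wm0 : Wm 0 = !![0,0,0; 0,0,-1; 0,1,0] := by
  ext a b; fin_cases a <;> fin_cases b <;> norm_num [Wm, leviCivita]

lemma Wm1 : Wm 1 = !![0,0,1; 0,0,0; -1,0,0] := by
  ext a b; fin_cases a <;> fin_cases b <;> norm_num [Wm, leviCivita]

lemma Wm2 : Wm 2 = !![0,-1,0; 1,0,0; 0,0,0] := by
  ext a b; fin_cases a <;> fin_cases b <;> norm_num [Wm, leviCivita]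

/-- One-parameter family of rotations about axis `i` (Rodrigues formula). -/
noncomputable def Qm (i : Fin 3) (t : ℝ) : Matrix (Fin 3) (Fin 3) ℝ :=
  1 + Real.sin t • Wm i + (1 - Real.cos t) • (Wm i * Wm i)

lemma Qm0 (t : ℝ) :
    Qm 0 t = !![1,0,0; 0, Real.cos t, -Real.sin t; 0, Real.sin t, Real.cos t] := by
  rw [Qm, Wm0]
  ext a b; fin_cases a <;> fin_cases b <;>
    simp [Matrix.mul_apply, Fin.sum_univ_three, Matrix.one_apply,
      Matrix.vecHead, Matrix.vecTail]

lemma Qm1 (t : ℝ) :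
    Qm 1 t = !![Real.cos t, 0, Real.sin t; 0, 1, 0; -Real.sin t, 0, Real.cos t] := by
  rw [Qm, Wm1]
  ext a b; fin_cases a <;> fin_cases b <;>
    simp [Matrix.mul_apply, Fin.sum_univ_three, Matrix.one_apply,
      Matrix.vecHead, Matrix.vecTail]

lemma Qm2 (t : ℝ) :
    Qm 2 t = !![Real.cos t, -Real.sin t, 0; Real.sin t, Real.cos t, 0; 0, 0, 1] := by
  rw [Qm, Wm2]
  ext a b; fin_cases a <;> fin_cases b <;>
    simp [Matrix.mul_apply, Fin.sum_univ_three, Matrix.one_apply,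
      Matrix.vecHead, Matrix.vecTail]

lemma Qm_orth (i : Fin 3) (t : ℝ) : (Qm i t).transpose * Qm i t = 1 := by
  have h := Real.sin_sq_add_cos_sq t
  fin_cases i <;>
    [rw [show ((⟨0, by norm_num⟩ : Fin 3)) = 0 from rfl, Qm0];
     rw [show ((⟨1, by norm_num⟩ : Fin 3)) = 1 from rfl, Qm1];
     rw [show ((⟨2, by norm_num⟩ : Fin 3)) = 2 from rfl, Qm2]] <;>
  · ext a b; fin_cases a <;> fin_cases b <;>
      simp [Matrix.mul_apply, Fin.sum_univ_three, Matrix.one_apply,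
        Matrix.vecHead, Matrix.vecTail] <;> nlinarith [h]

lemma Qm_det (i : Fin 3) (t : ℝ) : (Qm i t).det = 1 := by
  have h := Real.sin_sq_add_cos_sq t
  fin_cases i <;>
    [rw [show ((⟨0, by norm_num⟩ : Fin 3)) = 0 from rfl, Qm0];
     rw [show ((⟨1, by norm_num⟩ : Fin 3)) = 1 from rfl, Qm1];
     rw [show ((⟨2, by norm_num⟩ : Fin 3)) = 2 from rfl, Qm2]] <;>
  · simp [Matrix.det_fin_three, Matrix.vecHead, Matrix.vecTail]
    nlinarith [h]

lemma Qm_zero (i : Fin 3) : Qm i 0 = 1 := by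
  simp [Qm]

lemma Qm_entry_deriv (i : Fin 3) (a b : Fin 3) :
    HasDerivAt (fun t => Qm i t a b) (Wm i a b) 0 := by
  have h1 : HasDerivAt (fun t : ℝ => Real.sin t * Wm i a b) (Wm i a b) 0 := by
    simpa using (Real.hasDerivAt_sin 0).mul_const (Wm i a b)
  have h2 : HasDerivAt (fun t : ℝ => (1 - Real.cos t) * (Wm i * Wm i) a b) 0 0 := by
    simpa using (((hasDerivAt_const (0:ℝ) (1:ℝ)).sub (Real.hasDerivAt_cos 0)).mul_const
      ((Wm i * Wm i) a b))
  have := ((hasDerivAt_const (0:ℝ) ((1 : Matrix (Fin 3) (Fin 3) ℝ) a b)).fun_add h1).fun_add h2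
  simpa [Qm] using this

lemma first_deriv (i : Fin 3) (ν : Fin 3 → ℝ) :
    HasDerivAt (fun t => Qm i t *ᵥ ν) (Wm i *ᵥ ν) 0 := by
  rw [hasDerivAt_pi]
  intro j
  simp only [mulVec, dotProduct]
  exact HasDerivAt.fun_sum fun q _ => (Qm_entry_deriv i j q).mul_const (ν q)

lemma second_deriv (i : Fin 3) (G : Fin 3 → Fin 3 → ℝ) :
    HasDerivAt (fun t => (fun k p => (Qm i t * Matrix.of G * (Qm i t).transpose) k p))
      (fun k p => (Wm i * Matrix.of G + Matrix.of G * (Wm i).transpose) k p) 0 := by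
  rw [hasDerivAt_pi]
  intro k
  rw [hasDerivAt_pi]
  intro p
  simp only [Matrix.mul_apply, Matrix.transpose_apply, Matrix.of_apply, Matrix.add_apply]
  have hj : ∀ j : Fin 3, HasDerivAt
      (fun t => (∑ a, Qm i t k a * G a j) * Qm i t p j)
      ((∑ a, Wm i k a * G a j) * Qm i 0 p j + (∑ a, Qm i 0 k a * G a j) * Wm i p j) 0 :=
    fun j => (HasDerivAt.fun_sum fun a _ => (Qm_entry_deriv i k a).mul_const (G a j)).fun_mul
      (Qm_entry_deriv i p j)
  have h := HasDerivAt.fun_sum (fun j (_ : j ∈ Finset.univ) => hj j)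
  convert h using 1
  rw [Qm_zero]
  rw [Finset.sum_add_distrib]
  congr 1
  · simp [Matrix.one_apply]
  · simp [Matrix.one_apply]

/-- Ericksen's identity: a smooth rotationally invariant energy density
`ψ(ν, ∇ν)` satisfies
`ε_{iqp}[ν_q ∂ψ/∂ν_p + (∂_kν_q)∂ψ/∂(∂_kν_p) + (∂_qν_k)∂ψ/∂(∂_pν_k)] = 0`. -/
theorem ericksen_identity
    (ψ : (Fin 3 → ℝ) × (Fin 3 → Fin 3 → ℝ) → ℝ)
    (hψ : ContDiff ℝ (⊤ : ℕ∞) ψ)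
    (hinv : ∀ Q : Matrix (Fin 3) (Fin 3) ℝ, Q.transpose * Q = 1 → Q.det = 1 →
      ∀ (ν : Fin 3 → ℝ) (G : Fin 3 → Fin 3 → ℝ),
        ψ (Q *ᵥ ν, fun k p => (Q * Matrix.of G * Q.transpose) k p) = ψ (ν, G)) :
    ∀ (ν : Fin 3 → ℝ) (G : Fin 3 → Fin 3 → ℝ) (i : Fin 3),
      (∑ q : Fin 3, ∑ p : Fin 3, leviCivita i q p *
        (ν q * fderiv ℝ ψ (ν, G) (Pi.single p 1, 0)
         + ∑ k : Fin 3, G k q *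
             fderiv ℝ ψ (ν, G) (0, fun a b => Matrix.single k p (1 : ℝ) a b)
         + ∑ k : Fin 3, G q k *
             fderiv ℝ ψ (ν, G) (0, fun a b => Matrix.single p k (1 : ℝ) a b))) = 0 := by
  intro ν G i
  -- the curve of rotated configurations
  set c : ℝ → (Fin 3 → ℝ) × (Fin 3 → Fin 3 → ℝ) :=
    fun t => (Qm i t *ᵥ ν, fun k p => (Qm i t * Matrix.of G * (Qm i t).transpose) k p)
    with hc_def
  have hc0 : c 0 = (ν, G) := by
    rw [hc_def]
    simp only [Qm_zero]
    refine Prod.ext ?_ ?_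
    · simp
    · funext a b; simp
  have hc : HasDerivAt c
      (Wm i *ᵥ ν, fun k p => (Wm i * Matrix.of G + Matrix.of G * (Wm i).transpose) k p) 0 :=
    (first_deriv i ν).prodMk (second_deriv i G)
  have hψd : HasFDerivAt ψ (fderiv ℝ ψ (ν, G)) (c 0) := by
    rw [hc0]
    exact (hψ.differentiable (by simp) (ν, G)).hasFDerivAt
  have hcomp : HasDerivAt (fun t => ψ (c t))
      (fderiv ℝ ψ (ν, G)
        (Wm i *ᵥ ν, fun k p => (Wm i * Matrix.of G + Matrix.of G * (Wm i).transpose) k p)) 0 :=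
    hψd.comp_hasDerivAt 0 hc
  have hconst : (fun t => ψ (c t)) = fun _ => ψ (ν, G) := by
    funext t
    exact hinv (Qm i t) (Qm_orth i t) (Qm_det i t) ν G
  have hzero : fderiv ℝ ψ (ν, G)
      (Wm i *ᵥ ν, fun k p => (Wm i * Matrix.of G + Matrix.of G * (Wm i).transpose) k p) = 0 := by
    have h0 : HasDerivAt (fun t => ψ (c t)) 0 0 := by
      rw [hconst]; exact hasDerivAt_const 0 _
    exact hcomp.unique h0
  set v : Fin 3 → ℝ := Wm i *ᵥ ν with hv
  set M : Fin 3 → Fin 3 → ℝ :=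
    fun k p => (Wm i * Matrix.of G + Matrix.of G * (Wm i).transpose) k p with hM
  set D := fderiv ℝ ψ (ν, G) with hD
  have hdecomp : ((v, M) : (Fin 3 → ℝ) × (Fin 3 → Fin 3 → ℝ)) =
      (∑ p : Fin 3, v p • ((Pi.single p 1 : Fin 3 → ℝ), (0 : Fin 3 → Fin 3 → ℝ))) +
      ∑ k : Fin 3, ∑ p : Fin 3, M k p •
        ((0 : Fin 3 → ℝ), fun a b => Matrix.single k p (1:ℝ) a b) := by
    refine Prod.ext ?_ ?_ <;>
      simp only [Prod.fst_sum, Prod.snd_sum, Prod.smul_mk, Prod.mk_add_mk, Prod.fst_add,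
        Prod.snd_add, smul_zero, Finset.sum_const_zero, add_zero, zero_add]
    · funext j
      simp [Finset.sum_apply, Pi.single_apply, Fin.sum_univ_three]
    · funext a b
      simp [Finset.sum_apply, Matrix.single, Fin.sum_univ_three]
      fin_cases a <;> fin_cases b <;> simp
  have hlin : (∑ p : Fin 3, v p * D (Pi.single p 1, 0)) +
      ∑ k : Fin 3, ∑ p : Fin 3, M k p *
        D (0, fun a b => Matrix.single k p (1:ℝ) a b) = 0 := by
    rw [← hzero, hdecomp]
    simp only [map_add, map_sum, ContinuousLinearMap.map_smul, smul_eq_mul]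
  clear hzero hdecomp hcomp hconst hc hψd hc0
  fin_cases i <;>
  · simp only [Fin.sum_univ_three, hv, hM, Matrix.mulVec, dotProduct, Matrix.mul_apply,
      Matrix.add_apply, Matrix.transpose_apply, Matrix.of_apply, Wm] at hlin ⊢
    norm_num [leviCivita] at hlin ⊢
    linear_combination hlin
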